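/- Let X be an A-bounded operator on H admitting an A-adjoint Xs (i.e. A∘Xs = X*∘A). Then w_A(X) ≤ (1/2)·√(‖Xs∘X + X∘Xs‖_A + 2·w_A(X²)). -/

import Mathlib

noncomputable def sInner {E : Type*} [NormedAddCommGroup E] [InnerProductSpace ℂ E]
    (A : E →L[ℂ] E) (x y : E) : ℂ := inner ℂ (A x) y

noncomputable def sNorm {E : Type*} [NormedAddCommGroup E] [InnerProductSpace ℂ E]
    (A : E →L[ℂ] E) (x : E) : ℝ := Real.sqrt (sInner A x x).re

/-- The `A`-operator seminorm. -/
noncomputable def opSNorm {E : Type*} [NormedAddCommGroup E] [InnerProductSpace ℂ E]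
    (A T : E →L[ℂ] E) : ℝ := sSup {c | ∃ x : E, sNorm A x = 1 ∧ c = sNorm A (T x)}

/-- The `A`-numerical radius. -/
noncomputable def numRad {E : Type*} [NormedAddCommGroup E] [InnerProductSpace ℂ E]
    (A T : E →L[ℂ] E) : ℝ := sSup {c | ∃ x : E, sNorm A x = 1 ∧ c = ‖sInner A (T x) x‖}

/-- `T` is `A`-bounded. -/
def ABounded {E : Type*} [NormedAddCommGroup E] [InnerProductSpace ℂ E]
    (A T : E →L[ℂ] E) : Prop := ∃ c > 0, ∀ x : E, sNorm A (T x) ≤ c * sNorm A x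

/-- The 2×2 block operator `[[T, X], [Y, S]]` on `H ⊕ H` (with the ℓ² product structure). -/
noncomputable def blk {H : Type*} [NormedAddCommGroup H] [InnerProductSpace ℂ H]
    (T X Y S : H →L[ℂ] H) : WithLp 2 (H × H) →L[ℂ] WithLp 2 (H × H) :=
  ((WithLp.prodContinuousLinearEquiv 2 ℂ H H).symm.toContinuousLinearMap.comp
    (((T.coprod X).prod (Y.coprod S)).comp
      (WithLp.prodContinuousLinearEquiv 2 ℂ H H).toContinuousLinearMap))

/-- The diagonal operator `𝔸 = diag(A, A)` on `H ⊕ H`. -/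
noncomputable def twoA {H : Type*} [NormedAddCommGroup H] [InnerProductSpace ℂ H]
    (A : H →L[ℂ] H) : WithLp 2 (H × H) →L[ℂ] WithLp 2 (H × H) := blk A 0 0 A


/-!
Factor `A = B†B`. Then `⟨u, v⟩_A = ⟪B u, B v⟫`, so Cauchy–Schwarz and Buzano's inequality
`|⟪a, e⟫| |⟪e, b⟫| ≤ (‖a‖ ‖b‖ + |⟪a, b⟫|) / 2` (for a unit vector `e`) hold for the
`A`-semi-inner product. For `‖x‖_A = 1`, take `e = x`, `a = X x`, `b = Xs x`: since `Xs` is an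
`A`-adjoint, `⟨x, Xs x⟩_A = ⟨X x, x⟩_A` and `⟨X x, Xs x⟩_A = ⟨X² x, x⟩_A`, which gives
`|⟨X x, x⟩_A|² ≤ (‖X x‖_A ‖Xs x‖_A + |⟨X² x, x⟩_A|) / 2`. By AM–GM, `‖X x‖_A ‖Xs x‖_A` is at most
`(‖X x‖_A² + ‖Xs x‖_A²) / 2 = Re ⟨(Xs X + X Xs) x, x⟩_A / 2`. `A`-boundedness of `X` (and hence of
`Xs`) makes the suprema defining `‖·‖_A` and `w_A` finite, so they dominate the pointwise values.
-/

open scoped InnerProductSpace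

theorem norm_inner_mul_norm_inner_le {𝕜 E : Type*} [RCLike 𝕜] [NormedAddCommGroup E]
    [InnerProductSpace 𝕜 E] {e : E} (he : ‖e‖ = 1) (a b : E) :
    ‖⟪a, e⟫_𝕜‖ * ‖⟪e, b⟫_𝕜‖ ≤ (‖a‖ * ‖b‖ + ‖⟪a, b⟫_𝕜‖) / 2 := by
  set r := (𝕜 ∙ e).reflection b
  have hr : ⟪a, r⟫_𝕜 = 2 * ⟪a, e⟫_𝕜 * ⟪e, b⟫_𝕜 - ⟪a, b⟫_𝕜 := by
    simp only [r, Submodule.reflection_apply, Submodule.starProjection_unit_singleton 𝕜 he,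
      inner_sub_right, inner_smul_right, two_smul, inner_add_right]
    ring
  have htwice : 2 * (‖⟪a, e⟫_𝕜‖ * ‖⟪e, b⟫_𝕜‖) ≤ ‖a‖ * ‖b‖ + ‖⟪a, b⟫_𝕜‖ :=
    calc 2 * (‖⟪a, e⟫_𝕜‖ * ‖⟪e, b⟫_𝕜‖) = ‖⟪a, r⟫_𝕜 + ⟪a, b⟫_𝕜‖ := by
          rw [hr, sub_add_cancel, norm_mul, norm_mul, RCLike.norm_two, mul_assoc]
      _ ≤ ‖⟪a, r⟫_𝕜‖ + ‖⟪a, b⟫_𝕜‖ := norm_add_le _ _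
      _ ≤ ‖a‖ * ‖b‖ + ‖⟪a, b⟫_𝕜‖ := by
          gcongr
          simpa [r] using norm_inner_le_norm (𝕜 := 𝕜) a r
  linarith

section ASemiInnerProduct

variable {H : Type*} [NormedAddCommGroup H] [InnerProductSpace ℂ H] {A : H →L[ℂ] H}

theorem ContinuousLinearMap.IsPositive.exists_sInner_eq_inner [CompleteSpace H]
    (hA : A.IsPositive) : ∃ B : H →L[ℂ] H, ∀ u v, sInner A u v = ⟪B u, B v⟫_ℂ := by
  obtain ⟨B, rfl⟩ := CStarAlgebra.nonneg_iff_eq_star_mul_self.mp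
    ((ContinuousLinearMap.nonneg_iff_isPositive A).mpr hA)
  refine ⟨B, fun u v => ?_⟩
  rw [sInner, ContinuousLinearMap.star_eq_adjoint]
  exact ContinuousLinearMap.adjoint_inner_left B v (B u)

theorem sNorm_eq_norm_of_sInner_eq_inner {B : H →L[ℂ] H}
    (hB : ∀ u v, sInner A u v = ⟪B u, B v⟫_ℂ) (u : H) : sNorm A u = ‖B u‖ := by
  rw [sNorm, hB, inner_self_eq_norm_sq_to_K]
  norm_cast
  exact Real.sqrt_sq (norm_nonneg _)

theorem conj_sInner (hA : A.IsPositive) (u v : H) :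
    starRingEnd ℂ (sInner A u v) = sInner A v u := by
  rw [sInner, sInner, inner_conj_symm, hA.inner_left_eq_inner_right]

theorem re_sInner_self (hA : A.IsPositive) (u : H) : (sInner A u u).re = sNorm A u ^ 2 :=
  (Real.sq_sqrt (hA.re_inner_nonneg_left u)).symm

theorem norm_sInner_le [CompleteSpace H] (hA : A.IsPositive) (u v : H) :
    ‖sInner A u v‖ ≤ sNorm A u * sNorm A v := by
  obtain ⟨B, hB⟩ := hA.exists_sInner_eq_inner
  simpa only [hB, sNorm_eq_norm_of_sInner_eq_inner hB] using norm_inner_le_norm (𝕜 := ℂ) _ _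

theorem sNorm_add_le [CompleteSpace H] (hA : A.IsPositive) (u v : H) :
    sNorm A (u + v) ≤ sNorm A u + sNorm A v := by
  obtain ⟨B, hB⟩ := hA.exists_sInner_eq_inner
  simpa only [sNorm_eq_norm_of_sInner_eq_inner hB, map_add] using norm_add_le _ _

theorem norm_sInner_mul_norm_sInner_le [CompleteSpace H] (hA : A.IsPositive) {e : H}
    (he : sNorm A e = 1) (a b : H) :
    ‖sInner A a e‖ * ‖sInner A e b‖ ≤ (sNorm A a * sNorm A b + ‖sInner A a b‖) / 2 := by
  obtain ⟨B, hB⟩ := hA.exists_sInner_eq_inner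
  simp only [hB, sNorm_eq_norm_of_sInner_eq_inner hB] at he ⊢
  exact norm_inner_mul_norm_inner_le he _ _

theorem sInner_aAdjoint_left [CompleteSpace H] {X Xs : H →L[ℂ] H}
    (hXs : A.comp Xs = (ContinuousLinearMap.adjoint X).comp A) (u v : H) :
    sInner A (Xs u) v = sInner A u (X v) := by
  rw [sInner, ← ContinuousLinearMap.comp_apply, hXs, ContinuousLinearMap.comp_apply,
    ContinuousLinearMap.adjoint_inner_left, sInner]

theorem sInner_aAdjoint_right [CompleteSpace H] (hA : A.IsPositive) {X Xs : H →L[ℂ] H}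
    (hXs : A.comp Xs = (ContinuousLinearMap.adjoint X).comp A) (u v : H) :
    sInner A u (Xs v) = sInner A (X u) v := by
  rw [← conj_sInner hA, sInner_aAdjoint_left hXs, conj_sInner hA]

namespace ABounded

variable {S T : H →L[ℂ] H}

theorem comp (hS : ABounded A S) (hT : ABounded A T) : ABounded A (S.comp T) := by
  obtain ⟨c, hc, hSc⟩ := hS
  obtain ⟨d, hd, hTd⟩ := hT
  refine ⟨c * d, mul_pos hc hd, fun x => ?_⟩
  calc sNorm A (S (T x)) ≤ c * sNorm A (T x) := hSc _
    _ ≤ c * (d * sNorm A x) := by gcongr; exact hTd x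
    _ = c * d * sNorm A x := by ring

theorem add [CompleteSpace H] (hA : A.IsPositive) (hS : ABounded A S) (hT : ABounded A T) :
    ABounded A (S + T) := by
  obtain ⟨c, hc, hSc⟩ := hS
  obtain ⟨d, hd, hTd⟩ := hT
  refine ⟨c + d, add_pos hc hd, fun x => ?_⟩
  calc sNorm A (S x + T x) ≤ sNorm A (S x) + sNorm A (T x) := sNorm_add_le hA _ _
    _ ≤ c * sNorm A x + d * sNorm A x := add_le_add (hSc x) (hTd x)
    _ = (c + d) * sNorm A x := by ring

theorem aAdjoint [CompleteSpace H] (hA : A.IsPositive) {X Xs : H →L[ℂ] H}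
    (hX : ABounded A X) (hXs : A.comp Xs = (ContinuousLinearMap.adjoint X).comp A) :
    ABounded A Xs := by
  obtain ⟨c, hc, hXc⟩ := hX
  refine ⟨c, hc, fun u => ?_⟩
  have hsq : sNorm A (Xs u) ^ 2 ≤ c * sNorm A u * sNorm A (Xs u) :=
    calc sNorm A (Xs u) ^ 2 = (sInner A u (X (Xs u))).re := by
          rw [← re_sInner_self hA, sInner_aAdjoint_left hXs]
      _ ≤ sNorm A u * sNorm A (X (Xs u)) := (Complex.re_le_norm _).trans (norm_sInner_le hA _ _)
      _ ≤ sNorm A u * (c * sNorm A (Xs u)) :=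
          mul_le_mul_of_nonneg_left (hXc _) (Real.sqrt_nonneg _)
      _ = c * sNorm A u * sNorm A (Xs u) := by ring
  have h0 : 0 ≤ sNorm A (Xs u) := Real.sqrt_nonneg _
  rcases h0.eq_or_lt with h | h
  · rw [← h]; exact mul_nonneg hc.le (Real.sqrt_nonneg _)
  · exact le_of_mul_le_mul_right (by rwa [← pow_two]) h

theorem sNorm_le_opSNorm (hT : ABounded A T) {x : H} (hx : sNorm A x = 1) :
    sNorm A (T x) ≤ opSNorm A T := by
  obtain ⟨c, -, hTc⟩ := hT
  refine le_csSup ⟨c, ?_⟩ ⟨x, hx, rfl⟩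
  rintro _ ⟨y, hy, rfl⟩
  simpa [hy] using hTc y

theorem re_sInner_le_opSNorm [CompleteSpace H] (hA : A.IsPositive) (hT : ABounded A T) {x : H}
    (hx : sNorm A x = 1) : (sInner A (T x) x).re ≤ opSNorm A T :=
  calc (sInner A (T x) x).re ≤ sNorm A (T x) * sNorm A x :=
        (Complex.re_le_norm _).trans (norm_sInner_le hA _ _)
    _ ≤ opSNorm A T := by rw [hx, mul_one]; exact hT.sNorm_le_opSNorm hx

theorem norm_sInner_le_numRad [CompleteSpace H] (hA : A.IsPositive) (hT : ABounded A T) {x : H}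
    (hx : sNorm A x = 1) : ‖sInner A (T x) x‖ ≤ numRad A T := by
  obtain ⟨c, -, hTc⟩ := hT
  refine le_csSup ⟨c, ?_⟩ ⟨x, hx, rfl⟩
  rintro _ ⟨y, hy, rfl⟩
  calc ‖sInner A (T y) y‖ ≤ sNorm A (T y) * sNorm A y := norm_sInner_le hA _ _
    _ ≤ c := by simpa [hy] using hTc y

end ABounded

theorem norm_sInner_sq_le [CompleteSpace H] (hA : A.IsPositive) {X Xs : H →L[ℂ] H}
    (hXs : A.comp Xs = (ContinuousLinearMap.adjoint X).comp A) {x : H} (hx : sNorm A x = 1) :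
    ‖sInner A (X x) x‖ ^ 2 ≤
      ((sInner A ((Xs.comp X + X.comp Xs) x) x).re + 2 * ‖sInner A ((X.comp X) x) x‖) / 4 := by
  have hbuz := norm_sInner_mul_norm_sInner_le hA hx (X x) (Xs x)
  rw [sInner_aAdjoint_right hA hXs, sInner_aAdjoint_right hA hXs] at hbuz
  have hsum : sInner A ((Xs.comp X + X.comp Xs) x) x =
      sInner A (X x) (X x) + sInner A (Xs x) (Xs x) := by
    rw [← sInner_aAdjoint_left hXs, sInner_aAdjoint_right hA hXs]
    simp only [sInner, add_apply, ContinuousLinearMap.comp_apply, map_add, inner_add_left]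
  rw [hsum, Complex.add_re, re_sInner_self hA, re_sInner_self hA, ContinuousLinearMap.comp_apply]
  nlinarith [sq_nonneg (sNorm A (X x) - sNorm A (Xs x))]

end ASemiInnerProduct

theorem stmt4 {H : Type*} [NormedAddCommGroup H] [InnerProductSpace ℂ H] [CompleteSpace H]
    (A : H →L[ℂ] H) (hA : A.IsPositive)
    (X Xs : H →L[ℂ] H) (hX : ABounded A X)
    (hXs : A.comp Xs = (ContinuousLinearMap.adjoint X).comp A) :
    numRad A X ≤
      (1 / 2) * Real.sqrt (opSNorm A (Xs.comp X + X.comp Xs) + 2 * numRad A (X.comp X)) := by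
  have hXs_bdd := hX.aAdjoint hA hXs
  refine Real.sSup_le ?_ (by positivity)
  rintro _ ⟨x, hx, rfl⟩
  have hpt := norm_sInner_sq_le hA hXs hx
  have hop := ((hXs_bdd.comp hX).add hA (hX.comp hXs_bdd)).re_sInner_le_opSNorm hA hx
  have hnr := (hX.comp hX).norm_sInner_le_numRad hA hx
  have : 2 * ‖sInner A (X x) x‖ ≤
      √(opSNorm A (Xs.comp X + X.comp Xs) + 2 * numRad A (X.comp X)) :=
    Real.le_sqrt_of_sq_le (by nlinarith)
  linarith
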